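/- Fix integers K ≥ 1, d ≥ 1, a label y ∈ {1,…,K}, a point w ∈ ℝ^d and η ∈ ℝ. Define softmax : ℝ^K → ℝ^K by softmax(z)_k = exp(z_k)/Σ_{j=1}^{K} exp(z_j) and let e_y ∈ ℝ^K be the one-hot vector for y. Let z_o, z_u : ℝ^d → ℝ^K be differentiable, with Jacobians at w denoted J_o, J_u ∈ ℝ^{K×d}; set q_u = softmax(z_u(w)), q_o = softmax(z_o(w)), and A ∈ ℝ^{K×K} with A_{ij} = (q_o)_i·(1(i=j) − (q_o)_j). Assume moreover that the map f : ℝ^d → ℝ^K, f(v) = softmax(z_o(v)), is differentiable everywhere and its Fréchet derivative is M-Lipschitz (‖Df(v) − Df(v')‖_op ≤ M·‖v − v'‖ for all v, v'). Let L(v) = −log( softmax(z_u(v))_y ) and w' = w − η·∇_w L(w). Then ‖ softmax(z_o(w')) − softmax(z_o(w)) − η·A·(J_o J_uᵀ)·( e_y − q_u ) ‖₂ ≤ M · η² · ‖J_u‖_op², where ‖J_u‖_op is the operator (spectral) norm of J_u. -/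

import Mathlib

/-!
Cross-entropy is `L = logSumExp ∘ z_u - (z_u)_y`, and the gradient of `logSumExp` is the softmax,
so `∇L(w) = J_uᵀ (q_u - e_y)` and the SGD step is `w' - w = η J_uᵀ (e_y - q_u)`. By the chain rule
the derivative of `v ↦ softmax (z_o v)` at `w` is `A J_o`, so `η Δ` is exactly the first-order term
of `f(w') - f(w)`. Taylor's formula for a map with `M`-Lipschitz derivative bounds the remainder by
`M/2 ‖w' - w‖² ≤ M/2 η² ‖J_u‖² ‖e_y - q_u‖²`, and `‖e_y - q_u‖² = 1 - 2 (q_u)_y + ‖q_u‖² ≤ 2`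
because `q_u` lies in the probability simplex.
-/

open Real Finset Matrix WithLp

theorem norm_sub_sub_fderiv_le_of_lipschitz_fderiv {E F : Type*} [NormedAddCommGroup E]
    [NormedSpace ℝ E] [NormedAddCommGroup F] [NormedSpace ℝ F] {f : E → F}
    (hf : Differentiable ℝ f) {M : ℝ}
    (hLip : ∀ v v', ‖fderiv ℝ f v - fderiv ℝ f v'‖ ≤ M * ‖v - v'‖) (a b : E) :
    ‖f b - f a - fderiv ℝ f a (b - a)‖ ≤ M / 2 * ‖b - a‖ ^ 2 := by
  set v := b - a
  set φ : ℝ → F := fun t => f (a + t • v) - t • fderiv ℝ f a v - f a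
  have hφ : ∀ t : ℝ, HasDerivAt φ (fderiv ℝ f (a + t • v) v - fderiv ℝ f a v) t := by
    intro t
    have hline : HasDerivAt (fun t : ℝ => a + t • v) v t := by
      simpa using ((hasDerivAt_id t).smul_const v).const_add a
    have hfline := (hf (a + t • v)).hasFDerivAt.comp_hasDerivAt t hline
    exact ((hfline.sub ((hasDerivAt_id t).smul_const (fderiv ℝ f a v))).sub_const (f a)).congr_deriv
      (by rw [one_smul])
  have hφ' : ∀ t ∈ Set.Ico (0 : ℝ) 1,
      ‖fderiv ℝ f (a + t • v) v - fderiv ℝ f a v‖ ≤ M * ‖v‖ ^ 2 * t := by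
    intro t ht
    calc ‖fderiv ℝ f (a + t • v) v - fderiv ℝ f a v‖
        ≤ ‖fderiv ℝ f (a + t • v) - fderiv ℝ f a‖ * ‖v‖ :=
          ContinuousLinearMap.le_opNorm (fderiv ℝ f (a + t • v) - fderiv ℝ f a) v
      _ ≤ M * (t * ‖v‖) * ‖v‖ := by
          gcongr
          simpa [norm_smul, abs_of_nonneg ht.1] using hLip (a + t • v) a
      _ = M * ‖v‖ ^ 2 * t := by ring
  have hbound := image_norm_le_of_norm_deriv_right_le_deriv_boundary
    (B := fun t => M * ‖v‖ ^ 2 * t ^ 2 / 2)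
    (fun t _ => (hφ t).continuousAt.continuousWithinAt) (fun t _ => (hφ t).hasDerivWithinAt)
    (by simp [φ])
    (fun t => (((hasDerivAt_pow 2 t).const_mul (M * ‖v‖ ^ 2)).div_const 2).congr_deriv (by ring))
    hφ' (Set.right_mem_Icc.2 zero_le_one)
  simp only [φ, v, one_smul, add_sub_cancel] at hbound
  rw [sub_right_comm]
  linarith

lemma nonneg_of_forall_norm_sub_le_mul_norm_sub {E F : Type*} [NormedAddCommGroup E] [Nontrivial E]
    [SeminormedAddCommGroup F] {g : E → F} {M : ℝ} (h : ∀ v v', ‖g v - g v'‖ ≤ M * ‖v - v'‖) :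
    0 ≤ M := by
  obtain ⟨v, hv⟩ := exists_ne (0 : E)
  have hM := (norm_nonneg _).trans (h v 0)
  rw [sub_zero] at hM
  exact nonneg_of_mul_nonneg_left hM (norm_pos_iff.2 hv)

theorem HasGradientAt.comp_hasFDerivAt {E F : Type*} [NormedAddCommGroup E]
    [InnerProductSpace ℝ E] [CompleteSpace E] [NormedAddCommGroup F] [InnerProductSpace ℝ F]
    [CompleteSpace F] {g : F → ℝ} {g' : F} {f : E → F} {L : E →L[ℝ] F} {x : E}
    (hg : HasGradientAt g g' (f x)) (hf : HasFDerivAt f L x) :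
    HasGradientAt (g ∘ f) (L.adjoint g') x := by
  rw [hasGradientAt_iff_hasFDerivAt] at hg ⊢
  refine (hg.comp x hf).congr_fderiv ?_
  ext h
  simp [ContinuousLinearMap.adjoint_inner_left]

theorem Matrix.toEuclideanLin_of_apply_single {𝕜 m n : Type*} [RCLike 𝕜] [Fintype n]
    [DecidableEq n] (L : EuclideanSpace 𝕜 n →ₗ[𝕜] EuclideanSpace 𝕜 m) :
    toEuclideanLin (of fun i j => L (EuclideanSpace.single j 1) i) = L := by
  refine (EuclideanSpace.basisFun n 𝕜).toBasis.ext fun j => ?_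
  ext i
  simp [toLpLin_apply, mulVec_single]

-- `Jo * Juᴴ` is the kernel `K(x_o, x_u) = J_o J_uᵀ` of the paper.
theorem ContinuousLinearMap.apply_adjoint_apply_eq_mulVec {𝕜 k m n : Type*} [RCLike 𝕜]
    [Fintype k] [DecidableEq k] [Fintype n] [DecidableEq n] [Fintype m]
    (Lo : EuclideanSpace 𝕜 n →L[𝕜] EuclideanSpace 𝕜 m)
    (Lu : EuclideanSpace 𝕜 n →L[𝕜] EuclideanSpace 𝕜 k) (u : EuclideanSpace 𝕜 k) :
    Lo (Lu.adjoint u) = toLp 2 ((of (fun i l => Lo (EuclideanSpace.single l 1) i) *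
      (of fun j l => Lu (EuclideanSpace.single l 1) j)ᴴ) *ᵥ u) := by
  have ho := toEuclideanLin_of_apply_single (Lo : EuclideanSpace 𝕜 n →ₗ[𝕜] EuclideanSpace 𝕜 m)
  have hu := toEuclideanLin_of_apply_single (Lu : EuclideanSpace 𝕜 n →ₗ[𝕜] EuclideanSpace 𝕜 k)
  simp only [ContinuousLinearMap.coe_coe] at ho hu
  rw [← toLpLin_apply, toLpLin_mul (q := 2), LinearMap.comp_apply,
    toEuclideanLin_conjTranspose_eq_adjoint, ho, hu]
  rfl

namespace EuclideanSpace

variable {ι : Type*} [Fintype ι]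

noncomputable def softmax (z : EuclideanSpace ℝ ι) : EuclideanSpace ℝ ι :=
  toLp 2 fun k => exp (z k) / ∑ j, exp (z j)

@[simp] lemma softmax_apply (z : EuclideanSpace ℝ ι) (k : ι) :
    softmax z k = exp (z k) / ∑ j, exp (z j) := rfl

noncomputable def logSumExp (z : EuclideanSpace ℝ ι) : ℝ := log (∑ j, exp (z j))

lemma norm_sq_le_one_of_nonneg_of_sum_eq_one {q : EuclideanSpace ℝ ι} (hq : ∀ k, 0 ≤ q k)
    (hsum : ∑ k, q k = 1) : ‖q‖ ^ 2 ≤ 1 := by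
  rw [norm_sq_eq, ← hsum]
  refine sum_le_sum fun k _ => ?_
  have hk : q k ≤ 1 := hsum ▸ single_le_sum (fun j _ => hq j) (mem_univ k)
  rw [Real.norm_eq_abs, sq_abs]
  nlinarith [hq k]

section DecidableEq

variable [DecidableEq ι]

lemma norm_single_sub_sq_le_two {q : EuclideanSpace ℝ ι} (hq : ∀ k, 0 ≤ q k)
    (hsum : ∑ k, q k = 1) (y : ι) : ‖single y (1 : ℝ) - q‖ ^ 2 ≤ 2 := by
  have hq_norm := norm_sq_le_one_of_nonneg_of_sum_eq_one hq hsum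
  rw [norm_sub_sq_real, inner_single_left]
  simp only [PiLp.norm_single, norm_one, map_one, one_mul]
  linarith [hq y]

noncomputable def softmaxJacobian (z : EuclideanSpace ℝ ι) : Matrix ι ι ℝ :=
  diagonal (softmax z) - vecMulVec (softmax z) (softmax z)

lemma softmaxJacobian_apply (z : EuclideanSpace ℝ ι) (i j : ι) :
    softmaxJacobian z i j = softmax z i * ((if i = j then 1 else 0) - softmax z j) := by
  by_cases h : i = j <;> simp [softmaxJacobian, vecMulVec_apply, h, mul_sub]

end DecidableEq

variable [Nonempty ι]

lemma sum_exp_pos (z : EuclideanSpace ℝ ι) : 0 < ∑ j, exp (z j) :=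
  sum_pos (fun _ _ => exp_pos _) univ_nonempty

lemma softmax_pos (z : EuclideanSpace ℝ ι) (k : ι) : 0 < softmax z k :=
  div_pos (exp_pos _) (sum_exp_pos z)

lemma sum_softmax (z : EuclideanSpace ℝ ι) : ∑ k, softmax z k = 1 := by
  simp only [softmax_apply, ← sum_div, div_self (sum_exp_pos z).ne']

lemma softmax_apply_eq_exp_sub_logSumExp (z : EuclideanSpace ℝ ι) (k : ι) :
    softmax z k = exp (z k - logSumExp z) := by
  rw [softmax_apply, exp_sub, logSumExp, exp_log (sum_exp_pos z)]

lemma hasGradientAt_logSumExp (z : EuclideanSpace ℝ ι) :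
    HasGradientAt logSumExp (softmax z) z := by
  have hsum : HasFDerivAt (fun z : EuclideanSpace ℝ ι => ∑ j, exp (z j))
      (∑ j, exp (z j) • PiLp.proj 2 (fun _ => ℝ) j) z :=
    HasFDerivAt.fun_sum fun j _ => (PiLp.hasFDerivAt_apply 2 z j).exp
  rw [hasGradientAt_iff_hasFDerivAt]
  refine (hsum.log (sum_exp_pos z).ne').congr_fderiv ?_
  ext h
  simp only [_root_.smul_apply, _root_.sum_apply, PiLp.proj_apply, smul_eq_mul,
    InnerProductSpace.toDual_apply_apply, PiLp.inner_apply, softmax_apply, mul_sum]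
  refine sum_congr rfl fun j _ => ?_
  simp only [RCLike.inner_apply, conj_trivial]
  ring

variable [DecidableEq ι]

lemma hasFDerivAt_softmax (z : EuclideanSpace ℝ ι) :
    HasFDerivAt softmax (toEuclideanCLM (𝕜 := ℝ) (softmaxJacobian z)) z := by
  rw [← hasFDerivWithinAt_univ, hasFDerivWithinAt_piLp]
  intro i
  rw [hasFDerivWithinAt_univ, funext fun x => softmax_apply_eq_exp_sub_logSumExp x i]
  refine ((PiLp.hasFDerivAt_apply 2 z i).sub
    (hasGradientAt_logSumExp z).hasFDerivAt).exp.congr_fderiv ?_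
  ext h
  simp only [_root_.smul_apply, _root_.sub_apply, Pi.sub_apply, PiLp.proj_apply,
    ← softmax_apply_eq_exp_sub_logSumExp, ContinuousLinearMap.comp_apply, ofLp_toEuclideanCLM,
    softmaxJacobian, sub_mulVec, mulVec_diagonal, vecMulVec_mulVec,
    InnerProductSpace.toDual_apply_apply, PiLp.inner_apply, dotProduct, Pi.smul_apply,
    MulOpposite.smul_eq_mul_unop, MulOpposite.unop_op,
    RCLike.inner_apply, conj_trivial, smul_eq_mul, mul_sub, mul_comm (h.ofLp _)]

lemma hasGradientAt_neg_log_softmax (z : EuclideanSpace ℝ ι) (y : ι) :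
    HasGradientAt (fun z => -log (softmax z y)) (softmax z - single y 1) z := by
  have hfun : (fun z => -log (softmax z y)) = fun z => logSumExp z - z y := by
    funext z; rw [softmax_apply_eq_exp_sub_logSumExp, log_exp]; ring
  rw [hfun, hasGradientAt_iff_hasFDerivAt]
  refine ((hasGradientAt_logSumExp z).hasFDerivAt.sub
    (PiLp.hasFDerivAt_apply 2 z y)).congr_fderiv ?_
  ext h
  simp [inner_single_left]

variable {E : Type*} [NormedAddCommGroup E] [InnerProductSpace ℝ E] [CompleteSpace E]

lemma gradient_neg_log_softmax_comp {z : E → EuclideanSpace ℝ ι} {L : E →L[ℝ] EuclideanSpace ℝ ι}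
    {w : E} (hz : HasFDerivAt z L w) (y : ι) :
    gradient (fun v => -log (softmax (z v) y)) w = -L.adjoint (single y 1 - softmax (z w)) := by
  rw [← map_neg, neg_sub]
  exact ((hasGradientAt_neg_log_softmax (z w) y).comp_hasFDerivAt hz).gradient

lemma norm_adjoint_single_sub_softmax_sq_le (L : E →L[ℝ] EuclideanSpace ℝ ι)
    (z : EuclideanSpace ℝ ι) (y : ι) :
    ‖L.adjoint (single y 1 - softmax z)‖ ^ 2 ≤ ‖L‖ ^ 2 * 2 := by
  have hu := norm_single_sub_sq_le_two (fun k => (softmax_pos z k).le) (sum_softmax z) y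
  calc ‖L.adjoint (single y 1 - softmax z)‖ ^ 2 ≤ (‖L‖ * ‖single y 1 - softmax z‖) ^ 2 := by
        gcongr
        rw [← ContinuousLinearMap.adjoint.norm_map L]
        exact L.adjoint.le_opNorm _
    _ ≤ ‖L‖ ^ 2 * 2 := by rw [mul_pow]; gcongr

end EuclideanSpace

theorem stmt_8_general (K d : ℕ) (hK : 1 ≤ K) (hd : 1 ≤ d) (y : Fin K)
    (w : EuclideanSpace ℝ (Fin d)) (η M : ℝ)
    (softmax : EuclideanSpace ℝ (Fin K) → EuclideanSpace ℝ (Fin K))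
    (hsm : ∀ z k, softmax z k = Real.exp (z k) / ∑ j, Real.exp (z j))
    (zo zu : EuclideanSpace ℝ (Fin d) → EuclideanSpace ℝ (Fin K))
    (Lo Lu : EuclideanSpace ℝ (Fin d) →L[ℝ] EuclideanSpace ℝ (Fin K))
    (hzo : HasFDerivAt zo Lo w) (hzu : HasFDerivAt zu Lu w)
    (Jo Ju : Fin K → Fin d → ℝ)
    (hJo : ∀ i l, Jo i l = Lo (EuclideanSpace.single l 1) i)
    (hJu : ∀ i l, Ju i l = Lu (EuclideanSpace.single l 1) i)
    (A : Fin K → Fin K → ℝ)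
    (hA : ∀ i j, A i j =
      softmax (zo w) i * ((if i = j then 1 else 0) - softmax (zo w) j))
    (hf : Differentiable ℝ (fun v => softmax (zo v)))
    (hLip : ∀ v v', ‖fderiv ℝ (fun x => softmax (zo x)) v -
        fderiv ℝ (fun x => softmax (zo x)) v'‖ ≤ M * ‖v - v'‖)
    (L : EuclideanSpace ℝ (Fin d) → ℝ)
    (hL : ∀ v, L v = -Real.log (softmax (zu v) y))
    (w' : EuclideanSpace ℝ (Fin d))
    (hw' : w' = w - η • gradient L w)
    (Δ : EuclideanSpace ℝ (Fin K))
    (hΔ : ∀ i, Δ i = ∑ j, ∑ j', A i j * (∑ l, Jo j l * Ju j' l) *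
      ((if j' = y then 1 else 0) - softmax (zu w) j')) :
    ‖softmax (zo w') - softmax (zo w) - η • Δ‖ ≤ M * η ^ 2 * ‖Lu‖ ^ 2 := by
  have : Nonempty (Fin K) := ⟨⟨0, hK⟩⟩
  have : NeZero d := ⟨by omega⟩
  obtain rfl : softmax = EuclideanSpace.softmax := funext fun z => by ext k; exact hsm z k
  set u := EuclideanSpace.single y (1 : ℝ) - EuclideanSpace.softmax (zu w)
  have hstep : w' - w = η • Lu.adjoint u := by
    rw [hw', funext hL, EuclideanSpace.gradient_neg_log_softmax_comp hzu]
    module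
  have hlin : fderiv ℝ (fun v => EuclideanSpace.softmax (zo v)) w (w' - w) = η • Δ := by
    have hderiv : HasFDerivAt (fun v => EuclideanSpace.softmax (zo v))
        ((toEuclideanCLM (𝕜 := ℝ) (EuclideanSpace.softmaxJacobian (zo w))).comp Lo) w :=
      (EuclideanSpace.hasFDerivAt_softmax (zo w)).comp w hzo
    have hA' : A = EuclideanSpace.softmaxJacobian (zo w) :=
      funext₂ fun i j => by rw [hA, EuclideanSpace.softmaxJacobian_apply]
    rw [hderiv.fderiv, hstep, map_smul]
    congr 1
    ext i
    rw [hΔ, ContinuousLinearMap.comp_apply, ContinuousLinearMap.apply_adjoint_apply_eq_mulVec,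
      ofLp_toEuclideanCLM]
    simp only [mulVec, dotProduct, Matrix.mul_apply, conjTranspose_apply, star_trivial, of_apply,
      hA', hJo, hJu, u, PiLp.sub_apply, PiLp.single_apply, mul_sum, sum_mul, mul_assoc]
  have hstep_norm : ‖w' - w‖ ^ 2 ≤ η ^ 2 * (‖Lu‖ ^ 2 * 2) := by
    rw [hstep, norm_smul, mul_pow, Real.norm_eq_abs, sq_abs]
    gcongr
    exact EuclideanSpace.norm_adjoint_single_sub_softmax_sq_le Lu (zu w) y
  have hM : 0 ≤ M := nonneg_of_forall_norm_sub_le_mul_norm_sub hLip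
  calc _ ≤ M / 2 * ‖w' - w‖ ^ 2 := by
        simpa only [hlin] using norm_sub_sub_fderiv_le_of_lipschitz_fderiv hf hLip w w'
    _ ≤ M / 2 * (η ^ 2 * (‖Lu‖ ^ 2 * 2)) := by gcongr
    _ = M * η ^ 2 * ‖Lu‖ ^ 2 := by ring

/-- After one SGD step of learning rate `η` on the labelled sample `(x_u, y)`, the change of
the prediction on `x_o` equals `η·A·K(x_o,x_u)·(e_y − q_u)` up to a remainder bounded by
`M·η²·‖∇_w z(x_u)‖_op²`. -/
theorem stmt_8 (K d : ℕ) (hK : 1 ≤ K) (hd : 1 ≤ d) (y : Fin K)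
    (w : EuclideanSpace ℝ (Fin d)) (η M : ℝ)
    (softmax : EuclideanSpace ℝ (Fin K) → EuclideanSpace ℝ (Fin K))
    (hsm : ∀ z k, softmax z k = Real.exp (z k) / ∑ j, Real.exp (z j))
    (zo zu : EuclideanSpace ℝ (Fin d) → EuclideanSpace ℝ (Fin K))
    (hzod : Differentiable ℝ zo) (hzud : Differentiable ℝ zu)
    (Lo Lu : EuclideanSpace ℝ (Fin d) →L[ℝ] EuclideanSpace ℝ (Fin K))
    (hzo : HasFDerivAt zo Lo w) (hzu : HasFDerivAt zu Lu w)
    (Jo Ju : Fin K → Fin d → ℝ)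
    (hJo : ∀ i l, Jo i l = Lo (EuclideanSpace.single l 1) i)
    (hJu : ∀ i l, Ju i l = Lu (EuclideanSpace.single l 1) i)
    (A : Fin K → Fin K → ℝ)
    (hA : ∀ i j, A i j =
      softmax (zo w) i * ((if i = j then 1 else 0) - softmax (zo w) j))
    (hf : Differentiable ℝ (fun v => softmax (zo v)))
    (hLip : ∀ v v', ‖fderiv ℝ (fun x => softmax (zo x)) v -
        fderiv ℝ (fun x => softmax (zo x)) v'‖ ≤ M * ‖v - v'‖)
    (L : EuclideanSpace ℝ (Fin d) → ℝ)
    (hL : ∀ v, L v = -Real.log (softmax (zu v) y))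
    (w' : EuclideanSpace ℝ (Fin d))
    (hw' : w' = w - η • gradient L w)
    (Δ : EuclideanSpace ℝ (Fin K))
    (hΔ : ∀ i, Δ i = ∑ j, ∑ j', A i j * (∑ l, Jo j l * Ju j' l) *
      ((if j' = y then 1 else 0) - softmax (zu w) j')) :
    ‖softmax (zo w') - softmax (zo w) - η • Δ‖ ≤ M * η ^ 2 * ‖Lu‖ ^ 2 :=
  stmt_8_general K d hK hd y w η M softmax hsm zo zu Lo Lu hzo hzu Jo Ju hJo hJu A hA hf hLip L hL
    w' hw' Δ hΔ
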